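/- For every prime d = p ≡ 3 (mod 4) with d > 3, there exists a unimodular x₁ ∈ C such that the Legendre vector v (with v_0 = √x₀, x₀ = −2−√(d+1), v_j = x₁ for j a quadratic residue mod d, v_j = −1/x₁ otherwise) satisfies the X-overlap equation ⟨v|X^{−2j}|v⟩ = (√(d+1)+1)·v_j² for all j ≠ 0. -/

import Mathlib

open Matrix Finset ComplexConjugate

noncomputable section

/-- ω = exp(2πi/d) -/
def omg (d : ℕ) : ℂ := Complex.exp (2 * Real.pi * Complex.I / d)

/-- τ = -exp(πi/d) -/
def tau (d : ℕ) : ℂ := -Complex.exp (Real.pi * Complex.I / d)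

/-- The clock matrix `Z`, with `Z|r⟩ = ω^r |r⟩`. -/
def Zmat (d : ℕ) [NeZero d] : Matrix (ZMod d) (ZMod d) ℂ :=
  Matrix.diagonal fun r => omg d ^ r.val

/-- The shift matrix `X`, with `X|r⟩ = |r+1⟩` (indices mod d). -/
def Xmat (d : ℕ) [NeZero d] : Matrix (ZMod d) (ZMod d) ℂ :=
  Matrix.of fun r s => if r = s + 1 then 1 else 0

/-- The displacement operators `D_{j,k} = τ^{jk} X^j Z^k`. -/
def Dmat (d : ℕ) [NeZero d] (j k : ZMod d) : Matrix (ZMod d) (ZMod d) ℂ :=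
  tau d ^ (j.val * k.val) • (Xmat d ^ j.val * Zmat d ^ k.val)

/-- Standard Hermitian inner product, conjugate-linear in the first argument. -/
def ip {d : ℕ} [NeZero d] (u w : ZMod d → ℂ) : ℂ := ∑ k, conj (u k) * w k

/-!
Write `χ` for the quadratic character, `A = i·Im x₁` and `B = Re x₁`. Since `-1/x₁ = -conj x₁`,
away from `0` the vector is `v_k = A + χ(k) B`, so the overlap `∑ₖ conj(v_k) v_{k+2j}` is the
autocorrelation `-pA² - B²` of such a vector (by `∑ χ = 0` and the Jacobi sum
`∑ₖ χ(k) χ(k+m) = -1`), corrected at the two indices `0` and `-2j`. As `χ(-1) = -1`, the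
corrections add up to `2(A - v₀)(A + χ(2) χ(j) B)`. Choosing `Im x₁` so that
`v₀ = (1 - χ(2)(√(p+1) + 1)) A` turns the total into `(√(p+1) + 1)(A + χ(j) B)²`, and this choice
has `|Im x₁| ≤ 1` because `√(p+1) ≥ 2`. The argument works over every finite field in which `-1`
is not a square.
-/

section Correlation

variable {G R : Type*} [AddCommGroup G] [Fintype G] [CommRing R]

theorem sum_mul_apply_add_of_eq_off_zero {f f' g g' : G → R} (hf : ∀ k ≠ 0, f' k = f k)
    (hg : ∀ k ≠ 0, g' k = g k) {m : G} (hm : m ≠ 0) :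
    ∑ k, f' k * g' (k + m) =
      ∑ k, f k * g (k + m) + (f' 0 - f 0) * g m + f (-m) * (g' 0 - g 0) := by
  classical
  have hf' : f' = f + Pi.single 0 (f' 0 - f 0) := by
    ext k; rcases eq_or_ne k 0 with rfl | hk <;> simp [*]
  have hg' : g' = g + Pi.single 0 (g' 0 - g 0) := by
    ext k; rcases eq_or_ne k 0 with rfl | hk <;> simp [*]
  conv_lhs => rw [hf', hg']
  simp [Pi.single_apply, add_mul, mul_add, Finset.sum_add_distrib, add_eq_zero_iff_eq_neg, hm]

end Correlation

namespace MulChar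

variable {F R : Type*} [Field F] [Fintype F] [CommRing R] [IsDomain R]

theorem sum_mul_inv_apply_add {χ : MulChar F R} (hχ : χ ≠ 1) {m : F} (hm : m ≠ 0) :
    ∑ k, χ k * χ⁻¹ (k + m) = -1 := by
  have hunit : χ (-m) * χ⁻¹ m = χ (-1) := by
    rw [neg_eq_neg_one_mul, map_mul, mul_assoc, ← mul_apply, mul_inv_cancel, one_apply
      (Ne.isUnit hm), mul_one]
  calc ∑ k, χ k * χ⁻¹ (k + m)
      = ∑ x, χ (-m * x) * χ⁻¹ (-m * x + m) :=
        (Fintype.sum_equiv (Equiv.mulLeft₀ (-m) (neg_ne_zero.mpr hm)) _ _ fun _ => rfl).symm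
    _ = χ (-1) * jacobiSum χ χ⁻¹ := by
        rw [jacobiSum, Finset.mul_sum]
        refine Finset.sum_congr rfl fun x _ => ?_
        rw [show -m * x + m = m * (1 - x) by ring, map_mul, map_mul, ← hunit]
        ring
    _ = -1 := by
        rw [jacobiSum_nontrivial_inv hχ, mul_neg, ← map_mul, neg_mul_neg, mul_one, map_one]

theorem IsQuadratic.sum_mul_apply_add {χ : MulChar F R} (hq : χ.IsQuadratic) (hχ : χ ≠ 1)
    {m : F} (hm : m ≠ 0) : ∑ k, χ k * χ (k + m) = -1 := by
  simpa only [hq.inv] using sum_mul_inv_apply_add hχ hm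

theorem IsQuadratic.sum_add_mul_mul_add_mul {χ : MulChar F R} (hq : χ.IsQuadratic)
    (hχ : χ ≠ 1) {m : F} (hm : m ≠ 0) (a b a' b' : R) :
    ∑ k, (a + χ k * b) * (a' + χ (k + m) * b') = Fintype.card F * a * a' - b * b' := by
  have hshift : ∑ k, χ (k + m) = 0 :=
    (Fintype.sum_equiv (Equiv.addRight m) _ _ fun _ => rfl).trans (sum_eq_zero_of_ne_one hχ)
  have hexp : ∀ k, (a + χ k * b) * (a' + χ (k + m) * b') =
      a * a' + a' * b * χ k + a * b' * χ (k + m) + b * b' * (χ k * χ (k + m)) := fun k => by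
    ring
  simp only [hexp, Finset.sum_add_distrib, ← Finset.mul_sum, sum_eq_zero_of_ne_one hχ, hshift,
    hq.sum_mul_apply_add hχ hm, Finset.sum_const, Finset.card_univ, nsmul_eq_mul]
  ring

theorem IsQuadratic.sum_conj_mul_apply_add {χ : MulChar F ℂ} (hq : χ.IsQuadratic) (hχ : χ ≠ 1)
    (hneg : χ (-1) = -1) {A B : ℂ} (hA : conj A = -A) (hB : conj B = B) {v : F → ℂ}
    (hv₀ : conj (v 0) = -v 0)
    (hv : ∀ k ≠ 0, v k = A + χ k * B) {m : F} (hm : m ≠ 0) :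
    ∑ k, conj (v k) * v (k + m) =
      -(Fintype.card F) * A ^ 2 - B ^ 2 + 2 * (A - v 0) * (A + χ m * B) := by
  have hconj : ∀ k ≠ 0, conj (v k) = -A + χ k * B := fun k hk => by
    have hχk : conj (χ k) = χ k := by rcases hq k with h | h | h <;> simp [h]
    rw [hv k hk, map_add, map_mul, hA, hB, hχk]
  have hχm : χ (-m) = -χ m := by rw [neg_eq_neg_one_mul, map_mul, hneg, neg_one_mul]
  rw [sum_mul_apply_add_of_eq_off_zero hconj hv hm, hq.sum_add_mul_mul_add_mul hχ hm, hχm,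
    hv₀, MulChar.map_zero]
  ring

end MulChar

section Shift

variable {d : ℕ} [NeZero d]

theorem Xmat_mulVec_apply (v : ZMod d → ℂ) (r : ZMod d) : (Xmat d *ᵥ v) r = v (r - 1) := by
  simp [Xmat, Matrix.mulVec, dotProduct, ← sub_eq_iff_eq_add]

theorem Xmat_pow_mulVec_apply (n : ℕ) (v : ZMod d → ℂ) (r : ZMod d) :
    (Xmat d ^ n *ᵥ v) r = v (r - n) := by
  induction n generalizing v with
  | zero => simp
  | succ n ih =>
    rw [pow_succ, ← Matrix.mulVec_mulVec, ih, Xmat_mulVec_apply, Nat.cast_succ, sub_sub]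

theorem ip_Xmat_pow_val_neg_mulVec (u w : ZMod d → ℂ) (m : ZMod d) :
    ip u (Xmat d ^ (-m).val *ᵥ w) = ∑ k, conj (u k) * w (k + m) := by
  simp [ip, Xmat_pow_mulVec_apply]

end Shift

namespace Complex

theorem exists_norm_eq_one_mul_im_eq {κ y : ℝ} (h : |y| ≤ |κ|) :
    ∃ x : ℂ, ‖x‖ = 1 ∧ κ * x.im = y := by
  rcases eq_or_ne κ 0 with rfl | hκ
  · exact ⟨1, by simp, by simpa [eq_comm] using h⟩
  have hβ : (y / κ) ^ 2 ≤ 1 := by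
    rw [div_pow, div_le_one (by positivity)]
    exact sq_le_sq.mpr h
  refine ⟨⟨√(1 - (y / κ) ^ 2), y / κ⟩, ?_, mul_div_cancel₀ y hκ⟩
  rw [← sq_eq_sq₀ (norm_nonneg _) zero_le_one, Complex.sq_norm, Complex.normSq_apply,
    ← sq, ← sq, Real.sq_sqrt (by linarith)]
  ring

theorem neg_one_div_eq_of_norm_eq_one {x : ℂ} (hx : ‖x‖ = 1) : -1 / x = x.im * I - x.re := by
  rw [neg_div, one_div, inv_eq_conj hx]
  apply Complex.ext <;> simp

end Complex

theorem legendre_vector_apply {F : Type*} [Field F] [Fintype F] [DecidableEq F] {x : ℂ}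
    (hx : ‖x‖ = 1) {v : F → ℂ} (hsq : ∀ j : F, j ≠ 0 → IsSquare j → v j = x)
    (hnsq : ∀ j : F, j ≠ 0 → ¬IsSquare j → v j = -1 / x) {k : F} (hk : k ≠ 0) :
    v k = x.im * Complex.I + (quadraticChar F).ringHomComp (Int.castRingHom ℂ) k * x.re := by
  rw [MulChar.ringHomComp_apply]
  by_cases hk' : IsSquare k
  · rw [hsq k hk hk', (quadraticChar_one_iff_isSquare hk).mpr hk']
    simp [add_comm]
  · rw [hnsq k hk hk', Complex.neg_one_div_eq_of_norm_eq_one hx,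
      quadraticChar_neg_one_iff_not_isSquare.mpr hk']
    simp [sub_eq_add_neg]

theorem xoverlap_identity {q c s ε a b w : ℂ} (hq : q = c ^ 2 - 1) (hs : s ^ 2 = 1)
    (hε : ε ^ 2 = 1) (hab : a ^ 2 + b ^ 2 = 1) (hw : w ^ 2 = 2 + c)
    (hwa : (1 - s * (c + 1)) * a = w) :
    -q * (a * Complex.I) ^ 2 - b ^ 2 + 2 * (a * Complex.I - Complex.I * w) *
        (a * Complex.I + s * ε * b) = (c + 1) * (a * Complex.I + ε * b) ^ 2 := by
  subst hwa
  linear_combination (-(a * Complex.I) ^ 2) * hq - (c + 2) * hab + hw - (c + 1) * b ^ 2 * hε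
    + ((c + 1) ^ 2 * (a * Complex.I) ^ 2 + 2 * ε * (c + 1) * a * Complex.I * b) * hs
    + ((c + 2) * a ^ 2 - (1 - s * (c + 1)) ^ 2 * a ^ 2) * Complex.I_sq

theorem sq_le_sq_one_sub_mul_add_one {c s : ℝ} (hc : 2 ≤ c) (hs : s ^ 2 = 1) :
    2 + c ≤ (1 - s * (c + 1)) ^ 2 := by
  rcases sq_eq_one_iff.mp hs with rfl | rfl <;> nlinarith

section LegendreVector

variable {F : Type*} [Field F] [Fintype F] [DecidableEq F]

theorem sum_conj_legendre_vector_mul_apply_add_two_mul (hneg : ¬IsSquare (-1 : F)) {x : ℂ}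
    (hx : ‖x‖ = 1) (hxim : (1 - (quadraticChar F 2 : ℝ) * (√(Fintype.card F + 1) + 1)) * x.im =
      √(2 + √(Fintype.card F + 1)))
    {v : F → ℂ} (hv₀ : v 0 = Complex.I * √(2 + √(Fintype.card F + 1)))
    (hsq : ∀ j : F, j ≠ 0 → IsSquare j → v j = x)
    (hnsq : ∀ j : F, j ≠ 0 → ¬IsSquare j → v j = -1 / x) {j : F} (hj : j ≠ 0) :
    ∑ k, conj (v k) * v (k + 2 * j) = (√(Fintype.card F + 1) + 1) * v j ^ 2 := by
  have hF : ringChar F ≠ 2 := fun h => hneg (FiniteField.isSquare_of_char_two h _)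
  set χ := (quadraticChar F).ringHomComp (Int.castRingHom ℂ)
  have hχ : ∀ a, χ a = ((quadraticChar F a : ℤ) : ℝ) := fun a => by simp [χ]
  have hχsq : ∀ a ≠ 0, χ a ^ 2 = 1 := fun a ha => by
    rw [hχ]; exact_mod_cast quadraticChar_sq_one ha
  have hχneg : χ (-1) = -1 := by
    rw [hχ, quadraticChar_neg_one_iff_not_isSquare.mpr hneg]; simp
  have hv := fun k (hk : k ≠ 0) => legendre_vector_apply hx hsq hnsq hk
  rw [((quadraticChar_isQuadratic F).comp _).sum_conj_mul_apply_add
      ((MulChar.ringHomComp_ne_one_iff Int.cast_injective).mpr (quadraticChar_ne_one hF)) hχneg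
      (by simp) (Complex.conj_ofReal _) (by simp [hv₀]) hv (mul_ne_zero (Ring.two_ne_zero hF) hj),
    hv j hj, map_mul, hv₀]
  refine xoverlap_identity ?_ (hχsq 2 (Ring.two_ne_zero hF)) (hχsq j hj) ?_ ?_ ?_
  · rw [← Complex.ofReal_pow, Real.sq_sqrt (by positivity)]
    push_cast
    ring
  · exact_mod_cast (by rw [← Complex.sq_norm_sub_sq_re, hx]; ring : x.im ^ 2 + x.re ^ 2 = 1)
  · rw [← Complex.ofReal_pow, Real.sq_sqrt (by positivity)]
    push_cast
    ring
  · rw [hχ]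
    exact_mod_cast hxim

theorem exists_legendre_vector_xoverlap (hneg : ¬IsSquare (-1 : F)) :
    ∃ x₁ : ℂ, ‖x₁‖ = 1 ∧
      ∀ v : F → ℂ,
        v 0 = Complex.I * √(2 + √(Fintype.card F + 1)) →
        (∀ j : F, j ≠ 0 → IsSquare j → v j = x₁) →
        (∀ j : F, j ≠ 0 → ¬IsSquare j → v j = -1 / x₁) →
        ∀ j : F, j ≠ 0 →
          ∑ k, conj (v k) * v (k + 2 * j) = (√(Fintype.card F + 1) + 1) * v j ^ 2 := by
  have hF : ringChar F ≠ 2 := fun h => hneg (FiniteField.isSquare_of_char_two h _)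
  have hs : ((quadraticChar F 2 : ℤ) : ℝ) ^ 2 = 1 := by
    exact_mod_cast quadraticChar_sq_one (Ring.two_ne_zero hF)
  have hc : 2 ≤ √(Fintype.card F + 1 : ℝ) := by
    have := FiniteField.odd_card_of_char_ne_two hF
    have := Fintype.one_lt_card (α := F)
    exact Real.le_sqrt_of_sq_le (by norm_cast; omega)
  obtain ⟨x, hx, hxim⟩ := Complex.exists_norm_eq_one_mul_im_eq
    (κ := 1 - (quadraticChar F 2 : ℝ) * (√(Fintype.card F + 1) + 1))
    (y := √(2 + √(Fintype.card F + 1))) <| sq_le_sq.mp <| by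
    rw [Real.sq_sqrt (by positivity)]
    exact sq_le_sq_one_sub_mul_add_one hc hs
  exact ⟨x, hx, fun v hv₀ hsq hnsq j hj =>
    sum_conj_legendre_vector_mul_apply_add_two_mul hneg hx hxim hv₀ hsq hnsq hj⟩

end LegendreVector

open Classical in
theorem legendre_vector_solves_xoverlap_general (p : ℕ) [NeZero p] (hp : p.Prime)
    (hp4 : p % 4 = 3) :
    ∃ x₁ : ℂ, ‖x₁‖ = 1 ∧
      ∀ v : ZMod p → ℂ,
        v 0 = Complex.I * Real.sqrt (2 + Real.sqrt (p + 1)) →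
        (∀ j : ZMod p, j ≠ 0 → IsSquare j → v j = x₁) →
        (∀ j : ZMod p, j ≠ 0 → ¬IsSquare j → v j = -1 / x₁) →
        ∀ j : ZMod p, j ≠ 0 →
          ip v ((Xmat p ^ (-2 * j : ZMod p).val) *ᵥ v) =
            ((Real.sqrt (p + 1) : ℂ) + 1) * v j ^ 2 := by
  have := Fact.mk hp
  have hneg : ¬IsSquare (-1 : ZMod p) := by
    rw [FiniteField.isSquare_neg_one_iff, ZMod.card]; omega
  simp only [neg_mul, ip_Xmat_pow_val_neg_mulVec]
  simpa only [ZMod.card] using exists_legendre_vector_xoverlap hneg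

open Classical in
/-- for every prime d = p ≡ 3 (mod 4) with d > 3, there is a
unimodular x₁ such that the Legendre vector (v_0 = √x₀ with x₀ = −2−√(d+1),
v_j = x₁ for j a quadratic residue, v_j = −1/x₁ otherwise) satisfies the
X-overlap equation `⟨v|X^{−2j}|v⟩ = (√(d+1)+1)·v_j²` for all j ≠ 0. -/
theorem legendre_vector_solves_xoverlap (p : ℕ) [NeZero p] (hp : p.Prime)
    (hp4 : p % 4 = 3) (hp3 : 3 < p) :
    ∃ x₁ : ℂ, ‖x₁‖ = 1 ∧
      ∀ v : ZMod p → ℂ,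
        v 0 = Complex.I * Real.sqrt (2 + Real.sqrt (p + 1)) →
        (∀ j : ZMod p, j ≠ 0 → IsSquare j → v j = x₁) →
        (∀ j : ZMod p, j ≠ 0 → ¬IsSquare j → v j = -1 / x₁) →
        ∀ j : ZMod p, j ≠ 0 →
          ip v ((Xmat p ^ (-2 * j : ZMod p).val) *ᵥ v) =
            ((Real.sqrt (p + 1) : ℂ) + 1) * v j ^ 2 :=
  legendre_vector_solves_xoverlap_general p hp hp4
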